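/- Given λ ∈ ℂ and a finite dimensional 𝔞_0-module V̄, the space A ⊗ V̄ (A = ℂ[t,t⁻¹]) becomes an A𝔏-module under t^i·(t^j ⊗ u) = t^{i+j} ⊗ u, d_i·(t^j ⊗ u) = (λ+j)t^{i+j} ⊗ u + t^{i+j} ⊗ (d_i − d_0)·u, and x_s(i)·(t^j ⊗ u) = t^{i+j} ⊗ x_s(i)·u; that is, these formulas define a module over 𝔏̃ = W ⋉ (𝔤⊗A ⊕ A) on which A acts associatively and unitally. -/

import Mathlib

/-!
STATEMENT 12: Given `λ ∈ ℂ` and a finite dimensional `𝔞_0`-module `V̄`, the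
space `A ⊗ V̄` (`A = ℂ[t,t⁻¹]`, realized as `ℤ →₀ V̄` with `t^j ⊗ u` the
single-term element `single j u`) becomes an `A𝔏`-module under
`t^i·(t^j ⊗ u) = t^{i+j} ⊗ u`,
`d_i·(t^j ⊗ u) = (λ+j) t^{i+j} ⊗ u + t^{i+j} ⊗ (d_i − d_0)·u`,
`x_s(i)·(t^j ⊗ u) = t^{i+j} ⊗ x_s(i)·u`;
i.e. these operators satisfy the defining relations of
`𝔏̃ = W ⋉ (𝔤⊗A ⊕ A)` with `A` acting associatively and unitally.

The `𝔞_0`-module `V̄` is given by operators `Dop i` (action of `d_i − d_0`)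
and `Xop s i` (action of `x_s(i)`) satisfying the bracket relations of `𝔞_0`.
-/

variable {S : Type*} {V : Type*} [AddCommGroup V] [Module ℂ V]

/-- Action of `t^i` on `A ⊗ V̄`. -/
noncomputable def Tact (i : ℤ) : Module.End ℂ (ℤ →₀ V) :=
  Finsupp.lsum ℂ fun j : ℤ => Finsupp.lsingle (i + j)

/-- Action of `d_i` on `A ⊗ V̄`. -/
noncomputable def Dact (lam : ℂ) (Dop : ℤ → Module.End ℂ V) (i : ℤ) :
    Module.End ℂ (ℤ →₀ V) :=
  Finsupp.lsum ℂ fun j : ℤ =>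
    (Finsupp.lsingle (i + j)).comp ((lam + (j : ℂ)) • LinearMap.id + Dop i)

/-- Action of `x_s(i)` on `A ⊗ V̄`. -/
noncomputable def Xact (Xop : S → ℤ → Module.End ℂ V) (s : S) (i : ℤ) :
    Module.End ℂ (ℤ →₀ V) :=
  Finsupp.lsum ℂ fun j : ℤ => (Finsupp.lsingle (i + j)).comp (Xop s i)

/-! All three actions have the form `t^j ⊗ u ↦ t^(i+j) ⊗ f(j) u` for a family `f` of
endomorphisms of `V̄`. Such operators compose to operators of the same form, the inner shift
`k` feeding into the outer family as `f(k+j)`; so every bracket relation is an identity of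
endomorphisms of `V̄` in each degree `j`. The degree-dependent scalar `λ + j` in `d_i` produces the
cross terms `j (d_j - d_0) - i (d_i - d_0)` and `k x_s(k)`, which cancel the extra terms of the
`𝔞₀`-relations. -/

section ShiftEnd

variable {R G M : Type*} [CommRing R] [AddCommMonoid G] [AddCommGroup M] [Module R M]

/-- The operator `t^j ⊗ u ↦ t^(i+j) ⊗ f j u` on `A ⊗ M = G →₀ M`. -/
noncomputable def shiftEnd (i : G) : (G → Module.End R M) →ₗ[R] Module.End R (G →₀ M) where
  toFun f := Finsupp.lsum R fun j => (Finsupp.lsingle (i + j)).comp (f j)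
  map_add' f g := by ext; simp
  map_smul' r f := by ext; simp

@[simp]
theorem shiftEnd_single (i : G) (f : G → Module.End R M) (j : G) (u : M) :
    shiftEnd i f (Finsupp.single j u) = Finsupp.single (i + j) (f j u) := by
  simp [shiftEnd]

theorem shiftEnd_mul (i k : G) (f g : G → Module.End R M) :
    shiftEnd i f * shiftEnd k g = shiftEnd (i + k) fun j => f (k + j) * g j := by
  ext j u
  simp [add_assoc]

theorem shiftEnd_lie (i k : G) (f g : G → Module.End R M) :
    ⁅shiftEnd i f, shiftEnd k g⁆ =
      shiftEnd (i + k) fun j => f (k + j) * g j - g (i + j) * f j := by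
  rw [Ring.lie_def, shiftEnd_mul, shiftEnd_mul, add_comm k i, ← map_sub]
  rfl

theorem shiftEnd_const_lie (i k : G) (f g : Module.End R M) :
    ⁅shiftEnd i (fun _ => f), shiftEnd k (fun _ => g)⁆ = shiftEnd (i + k) fun _ => ⁅f, g⁆ := by
  rw [shiftEnd_lie]
  rfl

theorem shiftEnd_zero_one : shiftEnd (0 : G) (fun _ => (1 : Module.End R M)) = 1 := by
  ext j u
  simp

end ShiftEnd

theorem Tact_eq_shiftEnd (i : ℤ) : Tact (V := V) i = shiftEnd i fun _ => 1 := by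
  ext j u
  simp [Tact]

theorem Dact_eq_shiftEnd (lam : ℂ) (Dop : ℤ → Module.End ℂ V) (i : ℤ) :
    Dact lam Dop i = shiftEnd i fun j => (lam + j) • 1 + Dop i :=
  rfl

theorem Xact_eq_shiftEnd (Xop : S → ℤ → Module.End ℂ V) (s : S) (i : ℤ) :
    Xact Xop s i = shiftEnd i fun _ => Xop s i :=
  rfl

theorem Tact_mul_Tact (i j : ℤ) : Tact (V := V) i * Tact j = Tact (i + j) := by
  simp only [Tact_eq_shiftEnd, shiftEnd_mul, mul_one]

theorem Tact_zero : Tact (V := V) 0 = 1 := by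
  rw [Tact_eq_shiftEnd, shiftEnd_zero_one]

theorem Dact_lie_Dact (lam : ℂ) (Dop : ℤ → Module.End ℂ V)
    {i j : ℤ} (hDD : ⁅Dop i, Dop j⁆ =
      ((j : ℂ) - (i : ℂ)) • Dop (i + j) - (j : ℂ) • Dop j + (i : ℂ) • Dop i) :
    ⁅Dact lam Dop i, Dact lam Dop j⁆ = ((j : ℂ) - (i : ℂ)) • Dact lam Dop (i + j) := by
  simp only [Dact_eq_shiftEnd, shiftEnd_lie, ← map_smul]
  congr 1
  ext m u
  have h := LinearMap.congr_fun hDD u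
  simp only [Ring.lie_def, LinearMap.sub_apply, Module.End.mul_apply, LinearMap.add_apply,
    LinearMap.smul_apply] at h
  simp only [Pi.smul_apply, LinearMap.sub_apply, Module.End.mul_apply, LinearMap.add_apply,
    LinearMap.smul_apply, Module.End.one_apply, map_add, map_smul]
  push_cast
  linear_combination (norm := module) h

theorem Dact_lie_Xact (lam : ℂ) (β : S → ℂ) (Dop : ℤ → Module.End ℂ V)
    (Xop : S → ℤ → Module.End ℂ V) {i : ℤ} {s : S} {k : ℤ} (hDX : ⁅Dop i, Xop s k⁆ =
      ((k : ℂ) + (i : ℂ) * β s) • Xop s (i + k) - (k : ℂ) • Xop s k) :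
    ⁅Dact lam Dop i, Xact Xop s k⁆ = ((k : ℂ) + (i : ℂ) * β s) • Xact Xop s (i + k) := by
  simp only [Dact_eq_shiftEnd, Xact_eq_shiftEnd, shiftEnd_lie, ← map_smul]
  congr 1
  ext m u
  have h := LinearMap.congr_fun hDX u
  simp only [Ring.lie_def, LinearMap.sub_apply, Module.End.mul_apply, LinearMap.smul_apply] at h
  simp only [Pi.smul_apply, LinearMap.sub_apply, Module.End.mul_apply, LinearMap.add_apply,
    LinearMap.smul_apply, Module.End.one_apply, map_add, map_smul]
  push_cast
  linear_combination (norm := module) h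

theorem Xact_lie_Xact (c : S → S → (S →₀ ℂ)) (Xop : S → ℤ → Module.End ℂ V)
    {s p : S} {j k : ℤ} (hXX : ⁅Xop s j, Xop p k⁆ =
      (c s p).sum fun q a => a • Xop q (j + k)) :
    ⁅Xact Xop s j, Xact Xop p k⁆ = (c s p).sum fun q a => a • Xact Xop q (j + k) := by
  simp only [Xact_eq_shiftEnd, shiftEnd_const_lie, hXX, ← map_smul, ← map_finsuppSum]
  congr 1
  ext m
  simp [Finsupp.sum]

theorem Dact_lie_Tact (lam : ℂ) (Dop : ℤ → Module.End ℂ V) (i k : ℤ) :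
    ⁅Dact lam Dop i, Tact (V := V) k⁆ = (k : ℂ) • Tact (V := V) (i + k) := by
  simp only [Dact_eq_shiftEnd, Tact_eq_shiftEnd, shiftEnd_lie, ← map_smul]
  congr 1
  funext m
  simp only [mul_one, one_mul, Pi.smul_apply, Int.cast_add]
  module

theorem Xact_lie_Tact (Xop : S → ℤ → Module.End ℂ V) (s : S) (j k : ℤ) :
    ⁅Xact Xop s j, Tact (V := V) k⁆ = 0 := by
  rw [Xact_eq_shiftEnd, Tact_eq_shiftEnd, shiftEnd_const_lie, (Commute.one_right _).lie_eq]
  exact map_zero _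

theorem jet_module_structure_general (lam : ℂ) (β : S → ℂ) (c : S → S → (S →₀ ℂ))
    (Dop : ℤ → Module.End ℂ V) (Xop : S → ℤ → Module.End ℂ V)
    -- V̄ is an 𝔞₀-module:
    (hDD : ∀ i j : ℤ, ⁅Dop i, Dop j⁆ =
      ((j : ℂ) - (i : ℂ)) • Dop (i + j) - (j : ℂ) • Dop j + (i : ℂ) • Dop i)
    (hDX : ∀ (i : ℤ) (s : S) (k : ℤ), ⁅Dop i, Xop s k⁆ =
      ((k : ℂ) + (i : ℂ) * β s) • Xop s (i + k) - (k : ℂ) • Xop s k)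
    (hXX : ∀ (s p : S) (j k : ℤ), ⁅Xop s j, Xop p k⁆ =
      (c s p).sum fun q a => a • Xop q (j + k)) :
    -- A acts associatively and unitally:
    (∀ i j : ℤ, Tact (V := V) i * Tact j = Tact (i + j)) ∧
    (Tact (V := V) 0 = 1) ∧
    -- the defining relations of 𝔏̃ hold:
    (∀ i j : ℤ, ⁅Dact lam Dop i, Dact lam Dop j⁆ =
      ((j : ℂ) - (i : ℂ)) • Dact lam Dop (i + j)) ∧
    (∀ (i : ℤ) (s : S) (k : ℤ), ⁅Dact lam Dop i, Xact Xop s k⁆ =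
      ((k : ℂ) + (i : ℂ) * β s) • Xact Xop s (i + k)) ∧
    (∀ (s p : S) (j k : ℤ), ⁅Xact Xop s j, Xact Xop p k⁆ =
      ((c s p).sum fun q a => a • Xact Xop q (j + k) : Module.End ℂ (ℤ →₀ V))) ∧
    (∀ i k : ℤ, ⁅Dact lam Dop i, Tact (V := V) k⁆ = (k : ℂ) • Tact (V := V) (i + k)) ∧
    (∀ (s : S) (j k : ℤ), ⁅Xact Xop s j, Tact (V := V) k⁆ = 0) :=
  ⟨Tact_mul_Tact, Tact_zero, fun _ _ => Dact_lie_Dact lam Dop (hDD _ _),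
    fun _ _ _ => Dact_lie_Xact lam β Dop Xop (hDX _ _ _),
    fun _ _ _ _ => Xact_lie_Xact c Xop (hXX _ _ _ _), Dact_lie_Tact lam Dop, Xact_lie_Tact Xop⟩

theorem jet_module_structure (lam : ℂ) (β : S → ℂ) (c : S → S → (S →₀ ℂ))
    [FiniteDimensional ℂ V]
    (Dop : ℤ → Module.End ℂ V) (Xop : S → ℤ → Module.End ℂ V)
    -- V̄ is an 𝔞₀-module:
    (hDD : ∀ i j : ℤ, ⁅Dop i, Dop j⁆ =
      ((j : ℂ) - (i : ℂ)) • Dop (i + j) - (j : ℂ) • Dop j + (i : ℂ) • Dop i)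
    (hDX : ∀ (i : ℤ) (s : S) (k : ℤ), ⁅Dop i, Xop s k⁆ =
      ((k : ℂ) + (i : ℂ) * β s) • Xop s (i + k) - (k : ℂ) • Xop s k)
    (hXX : ∀ (s p : S) (j k : ℤ), ⁅Xop s j, Xop p k⁆ =
      (c s p).sum fun q a => a • Xop q (j + k)) :
    -- A acts associatively and unitally:
    (∀ i j : ℤ, Tact (V := V) i * Tact j = Tact (i + j)) ∧
    (Tact (V := V) 0 = 1) ∧
    -- the defining relations of 𝔏̃ hold:
    (∀ i j : ℤ, ⁅Dact lam Dop i, Dact lam Dop j⁆ =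
      ((j : ℂ) - (i : ℂ)) • Dact lam Dop (i + j)) ∧
    (∀ (i : ℤ) (s : S) (k : ℤ), ⁅Dact lam Dop i, Xact Xop s k⁆ =
      ((k : ℂ) + (i : ℂ) * β s) • Xact Xop s (i + k)) ∧
    (∀ (s p : S) (j k : ℤ), ⁅Xact Xop s j, Xact Xop p k⁆ =
      ((c s p).sum fun q a => a • Xact Xop q (j + k) : Module.End ℂ (ℤ →₀ V))) ∧
    (∀ i k : ℤ, ⁅Dact lam Dop i, Tact (V := V) k⁆ = (k : ℂ) • Tact (V := V) (i + k)) ∧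
    (∀ (s : S) (j k : ℤ), ⁅Xact Xop s j, Tact (V := V) k⁆ = 0) :=
  jet_module_structure_general lam β c Dop Xop hDD hDX hXX
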